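/- Assume 0 < p, q < 1, 0 < p_s, p_s^e < 1, and 0 < p_α ≤ 1. Then the marginal reconstruction accuracy at the legitimate receiver satisfies ∑_{b∈{0,1}} π(0,0,b) = q (q + p_α p_s (1−q)) / ((p+q)(p+q + p_α p_s (1−p−q))) and ∑_{b∈{0,1}} π(1,1,b) = p (p + p_α p_s (1−p)) / ((p+q)(p+q + p_α p_s (1−p−q))). -/

import Mathlib

open Matrix

noncomputable section

/-- λ11 = p_α p_s p_s^e -/
def l11 (ps pse pa : ℝ) : ℝ := pa * ps * pse
/-- λ10 = p_α p_s (1 − p_s^e) -/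
def l10 (ps pse pa : ℝ) : ℝ := pa * ps * (1 - pse)
/-- λ01 = p_α (1 − p_s) p_s^e -/
def l01 (ps pse pa : ℝ) : ℝ := pa * (1 - ps) * pse
/-- λ00 = p_α (1 − p_s)(1 − p_s^e) + (1 − p_α) -/
def l00 (ps pse pa : ℝ) : ℝ := pa * (1 - ps) * (1 - pse) + (1 - pa)
/-- P_A = λ11 + λ10 -/
def PA (ps pse pa : ℝ) : ℝ := l11 ps pse pa + l10 ps pse pa
/-- P_B = λ11 + λ01 -/
def PB (ps pse pa : ℝ) : ℝ := l11 ps pse pa + l01 ps pse pa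

/-- Source transition matrix Q. -/
def Qm (p q : ℝ) : Matrix (Fin 2) (Fin 2) ℝ := !![1 - p, p; q, 1 - q]

/-- Stationary distribution of the source: v_0 = q/(p+q), v_1 = p/(p+q). -/
def vstat (p q : ℝ) : Fin 2 → ℝ := ![q / (p + q), p / (p + q)]

/-- T1(x,a,b) = δ(a,b) v_a λ11 [(I − λ00 Q)⁻¹]_{a,x} -/
def T1 (p q ps pse pa : ℝ) (x a b : Fin 2) : ℝ :=
  (if a = b then (1 : ℝ) else 0) * vstat p q a * l11 ps pse pa *
    ((1 - l00 ps pse pa • Qm p q)⁻¹ a x)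

/-- T2(x,a,b) = v_b λ10 P_B [Q (I − (1−P_B) Q)⁻¹]_{b,a} [(I − λ00 Q)⁻¹]_{a,x} -/
def T2 (p q ps pse pa : ℝ) (x a b : Fin 2) : ℝ :=
  vstat p q b * l10 ps pse pa * PB ps pse pa *
    ((Qm p q * (1 - (1 - PB ps pse pa) • Qm p q)⁻¹) b a) *
    ((1 - l00 ps pse pa • Qm p q)⁻¹ a x)

/-- T3(x,a,b) = v_a λ01 P_A [Q (I − (1−P_A) Q)⁻¹]_{a,b} [(I − λ00 Q)⁻¹]_{b,x} -/
def T3 (p q ps pse pa : ℝ) (x a b : Fin 2) : ℝ :=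
  vstat p q a * l01 ps pse pa * PA ps pse pa *
    ((Qm p q * (1 - (1 - PA ps pse pa) • Qm p q)⁻¹) a b) *
    ((1 - l00 ps pse pa • Qm p q)⁻¹ b x)

/-- π(x,a,b) = T1 + T2 + T3 -/
def piDist (p q ps pse pa : ℝ) (x a b : Fin 2) : ℝ :=
  T1 p q ps pse pa x a b + T2 p q ps pse pa x a b + T3 p q ps pse pa x a b

/-!
Summing π(x, a, ·) over the eavesdropper's symbol b, each term collapses. The Kronecker delta
kills the sum in T1. In T2 the sum is `(v R)_a` for `R = Q (I - (1 - P_B) Q)⁻¹`; since `v Q = v`,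
`v (I - s Q)⁻¹ = v / (1 - s)`, so `v R = v / P_B`. In T3 the sum is `(R' G) a x` with
`R' = Q (I - (1 - P_A) Q)⁻¹` and `G = (I - λ00 Q)⁻¹`, and since `λ01 = (1 - P_A) - λ00` the
resolvent identity turns `λ01 R' G` into `(I - (1 - P_A) Q)⁻¹ - G`. With `λ11 + λ10 = P_A` the
`G`-terms cancel and `∑_b π(x, a, b) = v_a P_A [(I - (1 - P_A) Q)⁻¹]_{a,x}`, whose diagonal entries
are read off the explicit 2×2 inverse.
-/

theorem Commute.matrix_inv_right {n R : Type*} [Fintype n] [DecidableEq n] [CommRing R]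
    {A B : Matrix n n R} (h : Commute A B) : Commute A B⁻¹ := by
  by_cases hB : IsUnit B.det
  · calc A * B⁻¹ = B⁻¹ * (B * A) * B⁻¹ := by rw [nonsing_inv_mul_cancel_left (A := B) A hB]
      _ = B⁻¹ * A := by rw [← h.eq, Matrix.mul_assoc, mul_nonsing_inv_cancel_right _ _ hB]
  · rw [nonsing_inv_apply_not_isUnit _ hB]
    exact Commute.zero_right A

namespace Matrix

variable {n R : Type*} [Fintype n] [DecidableEq n] [CommRing R]

theorem resolvent_sub_resolvent (Q : Matrix n n R) {s c : R}
    (hs : IsUnit (1 - s • Q).det) (hc : IsUnit (1 - c • Q).det) :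
    (s - c) • (Q * (1 - s • Q)⁻¹ * (1 - c • Q)⁻¹) = (1 - s • Q)⁻¹ - (1 - c • Q)⁻¹ := by
  have hcomm : Commute Q (1 - s • Q)⁻¹ :=
    ((Commute.one_right Q).sub_right ((Commute.refl Q).smul_right s)).matrix_inv_right
  rw [inv_sub_inv (by simp only [isUnit_iff_isUnit_det, hs, hc]), hcomm.eq,
    show 1 - c • Q - (1 - s • Q) = (s - c) • Q by module, Matrix.mul_smul, Matrix.smul_mul]

theorem vecMul_resolvent_of_vecMul_eq_self {Q : Matrix n n R} {v : n → R} (hv : v ᵥ* Q = v)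
    {s : R} (hs : IsUnit (1 - s • Q).det) :
    (1 - s) • (v ᵥ* (1 - s • Q)⁻¹) = v := by
  have hfix : v ᵥ* (1 - s • Q) = (1 - s) • v := by
    rw [vecMul_sub, vecMul_one, vecMul_smul, hv, sub_smul, one_smul]
  rw [← smul_vecMul, ← hfix, vecMul_vecMul, mul_nonsing_inv _ hs, vecMul_one]

end Matrix

section TwoState

variable (p q : ℝ)

theorem vstat_vecMul_Qm (hpq : p + q ≠ 0) : vstat p q ᵥ* Qm p q = vstat p q := by
  ext j
  fin_cases j <;>
  · simp only [vecMul, dotProduct, Fin.sum_univ_two, vstat, Qm, of_apply, Fin.zero_eta, Fin.mk_one,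
      cons_val', cons_val_zero, cons_val_one, cons_val_fin_one]
    field_simp
    ring

theorem one_sub_smul_Qm (c : ℝ) :
    1 - c • Qm p q = !![1 - c * (1 - p), -(c * p); -(c * q), 1 - c * (1 - q)] := by
  ext i j
  fin_cases i <;> fin_cases j <;> simp [Qm]

theorem det_one_sub_smul_Qm (c : ℝ) :
    (1 - c • Qm p q).det = (1 - c) * (1 - c * (1 - p - q)) := by
  rw [one_sub_smul_Qm, det_fin_two_of]
  ring

theorem isUnit_det_one_sub_smul_Qm {p q c : ℝ} (hpq : 0 ≤ p + q) (hc0 : 0 ≤ c) (hc1 : c < 1) :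
    IsUnit (1 - c • Qm p q).det := by
  rw [det_one_sub_smul_Qm, isUnit_iff_ne_zero]
  have : c * (1 - p - q) < 1 := by nlinarith
  exact mul_ne_zero (by linarith) (by linarith)

theorem one_sub_one_sub_smul_Qm_inv_apply_zero_zero (u : ℝ) :
    (1 - (1 - u) • Qm p q)⁻¹ 0 0 = (q + u * (1 - q)) / (u * (p + q + u * (1 - p - q))) := by
  rw [inv_def, det_one_sub_smul_Qm, one_sub_smul_Qm, adjugate_fin_two_of, Ring.inverse_eq_inv,
    show (1 - (1 - u)) * (1 - (1 - u) * (1 - p - q)) = u * (p + q + u * (1 - p - q)) by ring]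
  simp only [Matrix.smul_apply, of_apply, cons_val', cons_val_zero, cons_val_fin_one, smul_eq_mul]
  ring

theorem one_sub_one_sub_smul_Qm_inv_apply_one_one (u : ℝ) :
    (1 - (1 - u) • Qm p q)⁻¹ 1 1 = (p + u * (1 - p)) / (u * (p + q + u * (1 - p - q))) := by
  rw [inv_def, det_one_sub_smul_Qm, one_sub_smul_Qm, adjugate_fin_two_of, Ring.inverse_eq_inv,
    show (1 - (1 - u)) * (1 - (1 - u) * (1 - p - q)) = u * (p + q + u * (1 - p - q)) by ring]
  simp only [Matrix.smul_apply, of_apply, cons_val', cons_val_one, cons_val_fin_one, smul_eq_mul]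
  ring

end TwoState

section Marginal

variable {p q : ℝ} (ps pse pa : ℝ)

theorem one_sub_PA_sub_l00 : 1 - PA ps pse pa - l00 ps pse pa = l01 ps pse pa := by
  simp only [PA, l11, l10, l01, l00]
  ring

theorem sum_piDist (hpq : p + q ≠ 0) (hA : IsUnit (1 - (1 - PA ps pse pa) • Qm p q).det)
    (hB : IsUnit (1 - (1 - PB ps pse pa) • Qm p q).det)
    (h00 : IsUnit (1 - l00 ps pse pa • Qm p q).det) (x a : Fin 2) :
    ∑ b, piDist p q ps pse pa x a b =
      vstat p q a * PA ps pse pa * (1 - (1 - PA ps pse pa) • Qm p q)⁻¹ a x := by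
  set G := (1 - l00 ps pse pa • Qm p q)⁻¹
  have hT1 : ∑ b, T1 p q ps pse pa x a b = vstat p q a * l11 ps pse pa * G a x := by
    simp [T1, G]
  have hT2 : ∑ b, T2 p q ps pse pa x a b = vstat p q a * l10 ps pse pa * G a x := by
    have hstat := vecMul_resolvent_of_vecMul_eq_self (vstat_vecMul_Qm p q hpq) hB
    rw [sub_sub_cancel, ← vstat_vecMul_Qm p q hpq, vecMul_vecMul, vstat_vecMul_Qm p q hpq]
      at hstat
    have hstat_a := congrFun hstat a
    simp only [Pi.smul_apply, smul_eq_mul, vecMul, dotProduct] at hstat_a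
    rw [← hstat_a]
    simp only [T2, Finset.sum_mul, Finset.mul_sum]
    exact Finset.sum_congr rfl fun b _ => by ring
  have hT3 : ∑ b, T3 p q ps pse pa x a b = vstat p q a * PA ps pse pa *
      ((1 - (1 - PA ps pse pa) • Qm p q)⁻¹ a x - G a x) := by
    have hres := congrFun (congrFun (resolvent_sub_resolvent (Qm p q) hA h00) a) x
    rw [one_sub_PA_sub_l00, Matrix.smul_apply, Matrix.sub_apply, smul_eq_mul, Matrix.mul_apply,
      Finset.mul_sum] at hres
    rw [← hres]
    simp only [T3, Finset.mul_sum]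
    exact Finset.sum_congr rfl fun b _ => by ring
  simp only [piDist, Finset.sum_add_distrib, hT1, hT2, hT3, PA]
  ring

end Marginal

theorem stmt13 (p q ps pse pa : ℝ)
    (hp0 : 0 < p) (hq0 : 0 < q)
    (hs0 : 0 < ps) (hs1 : ps < 1) (he0 : 0 < pse) (he1 : pse < 1)
    (ha0 : 0 < pa) (ha1 : pa ≤ 1) :
    (∑ b : Fin 2, piDist p q ps pse pa 0 0 b =
      q * (q + pa * ps * (1 - q)) /
        ((p + q) * (p + q + pa * ps * (1 - p - q)))) ∧
    (∑ b : Fin 2, piDist p q ps pse pa 1 1 b =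
      p * (p + pa * ps * (1 - p)) /
        ((p + q) * (p + q + pa * ps * (1 - p - q)))) := by
  have hpq : 0 < p + q := by linarith
  have hPA : PA ps pse pa = pa * ps := by simp only [PA, l11, l10]; ring
  have hPB : PB ps pse pa = pa * pse := by simp only [PB, l11, l01]; ring
  have hpaps1 : pa * ps ≤ 1 := mul_le_one₀ ha1 hs0.le hs1.le
  have hA := isUnit_det_one_sub_smul_Qm (c := 1 - PA ps pse pa) hpq.le
    (by rw [hPA]; linarith) (by rw [hPA]; linarith [mul_pos ha0 hs0])
  have hB := isUnit_det_one_sub_smul_Qm (c := 1 - PB ps pse pa) hpq.le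
    (by rw [hPB]; linarith [mul_le_one₀ ha1 he0.le he1.le])
    (by rw [hPB]; linarith [mul_pos ha0 he0])
  have h00 := isUnit_det_one_sub_smul_Qm (c := l00 ps pse pa) hpq.le
    (by simp only [l00]; nlinarith [mul_pos (sub_pos.2 hs1) (sub_pos.2 he1)])
    (by simp only [l00]; nlinarith [mul_pos (sub_pos.2 hs1) he0])
  have hden : p + q + pa * ps * (1 - p - q) ≠ 0 := by
    nlinarith [mul_nonneg (sub_nonneg.2 hpaps1) hpq.le]
  refine ⟨?_, ?_⟩
  · rw [sum_piDist ps pse pa hpq.ne' hA hB h00, one_sub_one_sub_smul_Qm_inv_apply_zero_zero, hPA]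
    simp only [vstat, cons_val_zero]
    field_simp
  · rw [sum_piDist ps pse pa hpq.ne' hA hB h00, one_sub_one_sub_smul_Qm_inv_apply_one_one, hPA]
    simp only [vstat, cons_val_one, cons_val_zero]
    field_simp
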